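/- Let ρ ∈ (0,1), θ > 0, α ∈ (0,2), n ∈ ℕ and 0 ≤ t₁ ≤ … ≤ t_n. Set γ_α(t,s) := t^α + s^α - |t-s|^α and let Σ be the n×n matrix with entries Σ_{jk} = γ_α(t_j,t_k). Let Y and X = (X₁,…,X_n) be independent random variables on a probability space, where Y has distribution with density l^θ_ρ and X is a centered Gaussian vector with E[exp(i⟨ξ,X⟩)] = exp(-(1/2)⟨ξ, Σξ⟩) for all ξ ∈ ℝⁿ. Then for every ξ ∈ ℝⁿ, E[exp(i √Y ⟨ξ, X⟩)] = Γ(ρ, θ + (1/2)∑_{j,k=1}^n ξ_j ξ_k γ_α(t_j,t_k)) / Γ(ρ,θ); i.e. √Y·X realizes the finite-dimensional distribution of the tempered Γ-grey Brownian motion. -/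

import Mathlib

open MeasureTheory Real Set ProbabilityTheory

/-- Upper incomplete gamma function `Γ(ρ, x) = ∫_x^∞ e^{-w} w^{ρ-1} dw`. -/
noncomputable def uGamma (ρ x : ℝ) : ℝ := ∫ w in Set.Ioi x, Real.exp (-w) * w ^ (ρ - 1)

/-- The tempered Γ-grey density `l^θ_ρ`. -/
noncomputable def lDens (ρ θ y : ℝ) : ℝ :=
  if 1 < y then Real.exp (-θ * y) / (uGamma ρ θ * Real.Gamma (1 - ρ) * y * (y - 1) ^ ρ) else 0

/-- The covariance kernel `γ_α(t,s) = t^α + s^α - |t-s|^α` of fractional Brownian motion. -/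
noncomputable def gammaCov (α t s : ℝ) : ℝ := t ^ α + s ^ α - |t - s| ^ α

lemma shiftIoi {E : Type*} [NormedAddCommGroup E] [NormedSpace ℝ E] (f : ℝ → E) (a : ℝ) :
    ∫ y in Ioi a, f y = ∫ u in Ioi (0:ℝ), f (u + a) := by
  have h := (measurePreserving_add_right (volume : Measure ℝ) a).setIntegral_preimage_emb
      (measurableEmbedding_addRight a) f (Ioi a)
  simpa using h.symm

lemma shiftIoi_integrableOn (f : ℝ → ℝ) (a : ℝ)
    (h : IntegrableOn (fun u => f (u + a)) (Ioi (0:ℝ))) : IntegrableOn f (Ioi a) := by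
  have hmp : MeasurePreserving (fun x => x + a) (volume.restrict (Ioi (0:ℝ)))
      (volume.restrict (Ioi a)) := by
    have := (measurePreserving_add_right (volume : Measure ℝ) a).restrict_preimage
      (measurableSet_Ioi (a := a))
    simpa using this
  have := (hmp.integrable_comp_emb (measurableEmbedding_addRight a)).mp h
  exact this

-- scaled gamma integral
lemma int_exp_rpow {s b : ℝ} (hs : 0 < s) (hb : 0 < b) :
    ∫ x in Ioi (0:ℝ), Real.exp (-b * x) * x ^ (s - 1) = b ^ (-s) * Real.Gamma s := by
  have := integral_rpow_mul_exp_neg_mul_rpow (p := 1) (q := s - 1) (b := b)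
    (by linarith) (by linarith) hb
  simp only [Real.rpow_one] at this
  rw [show ∫ x in Ioi (0:ℝ), Real.exp (-b * x) * x ^ (s - 1)
      = ∫ x in Ioi (0:ℝ), x ^ (s - 1) * Real.exp (-b * x) by
    refine setIntegral_congr_fun measurableSet_Ioi fun x _ => by ring, this]
  rw [show s - 1 + 1 = s by ring]
  ring

lemma intOn_exp_rpow {s b : ℝ} (hs : 0 < s) (hb : 0 < b) :
    IntegrableOn (fun x => Real.exp (-b * x) * x ^ (s - 1)) (Ioi (0:ℝ)) := by
  have := integrableOn_rpow_mul_exp_neg_mul_rpow (s := s - 1) (p := 1) (b := b)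
    (by linarith) one_pos hb
  simp only [Real.rpow_one] at this
  exact this.congr_fun (fun x _ => by ring) measurableSet_Ioi

-- Lemma A : ∫_{Ioi 1} e^{-μ y}(y-1)^{-ρ} dy = e^{-μ} Γ(1-ρ) μ^{ρ-1}
lemma lemA {ρ μ : ℝ} (hρ : ρ ∈ Set.Ioo (0:ℝ) 1) (hμ : 0 < μ) :
    ∫ y in Ioi (1:ℝ), Real.exp (-μ * y) * (y - 1) ^ (-ρ)
      = Real.exp (-μ) * Real.Gamma (1 - ρ) * μ ^ (ρ - 1) := by
  rw [shiftIoi (fun y => Real.exp (-μ * y) * (y - 1) ^ (-ρ)) 1]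
  have : ∀ u ∈ Ioi (0:ℝ), Real.exp (-μ * (u + 1)) * (u + 1 - 1) ^ (-ρ)
      = Real.exp (-μ) * (Real.exp (-μ * u) * u ^ ((1 - ρ) - 1)) := by
    intro u _
    rw [show -μ * (u + 1) = -μ * u + -μ by ring, Real.exp_add]
    rw [show (1:ℝ) - ρ - 1 = -ρ by ring]
    ring_nf
  rw [setIntegral_congr_fun measurableSet_Ioi this, integral_const_mul,
    int_exp_rpow (by linarith [hρ.2]) hμ]
  rw [show μ ^ (-(1-ρ)) = μ ^ (ρ - 1) by rw [show -(1-ρ) = ρ - 1 by ring]]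
  ring

lemma lemA_int {ρ μ : ℝ} (hρ : ρ ∈ Set.Ioo (0:ℝ) 1) (hμ : 0 < μ) :
    IntegrableOn (fun y => Real.exp (-μ * y) * (y - 1) ^ (-ρ)) (Ioi (1:ℝ)) := by
  apply shiftIoi_integrableOn
  have h : IntegrableOn (fun u => Real.exp (-μ) * (Real.exp (-μ * u) * u ^ ((1-ρ) - 1)))
      (Ioi (0:ℝ)) := (intOn_exp_rpow (s := 1 - ρ) (b := μ) (by linarith [hρ.2]) hμ).const_mul
    (Real.exp (-μ))
  refine h.congr_fun (fun u hu => ?_) measurableSet_Ioi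
  rw [show -μ * (u + 1) = -μ * u + -μ by ring, Real.exp_add, show (1:ℝ) - ρ - 1 = -ρ by ring,
    add_sub_cancel_right]
  ring

lemma uGamma_pos {ρ x : ℝ} (hρ : 0 < ρ) (hx : 0 ≤ x) : 0 < uGamma ρ x := by
  have hint : IntegrableOn (fun w => Real.exp (-w) * w ^ (ρ - 1)) (Ioi x) := by
    refine ((intOn_exp_rpow hρ one_pos).mono_set (Ioi_subset_Ioi hx)).congr_fun
      (fun w _ => by dsimp only; rw [neg_one_mul]) measurableSet_Ioi
  rw [uGamma]
  rw [setIntegral_pos_iff_support_of_nonneg_ae]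
  · have hsub : Ioi (x+1) ⊆ Function.support fun w => Real.exp (-w) * w ^ (ρ - 1) := by
      intro w hw
      have hw0 : 0 < w := lt_of_le_of_lt (by linarith) hw
      simp only [Function.mem_support]
      positivity
    refine lt_of_lt_of_le ?_ (measure_mono (inter_subset_inter_left _ hsub))
    rw [inter_eq_left.mpr (Ioi_subset_Ioi (by linarith))]
    simp
  · filter_upwards [ae_restrict_mem measurableSet_Ioi] with w hw
    have hw0 : 0 < w := lt_of_le_of_lt hx hw
    positivity
  · exact hint

lemma int_exp_inv {y : ℝ} (hy : 0 < y) :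
    ∫ s in Ioi (0:ℝ), Real.exp (-(y * s)) = y⁻¹ := by
  have h := integral_comp_mul_left_Ioi (fun s => Real.exp (-s)) 0 hy
  simp only [mul_zero, integral_exp_neg_Ioi, neg_zero, Real.exp_zero, smul_eq_mul, mul_one] at h
  exact h

lemma lemB {ρ lam : ℝ} (hρ : ρ ∈ Set.Ioo (0:ℝ) 1) (hl : 0 < lam) :
    ∫ y in Ioi (1:ℝ), Real.exp (-lam * y) / (y * (y - 1) ^ ρ)
      = Real.Gamma (1 - ρ) * uGamma ρ lam := by
  set F : ℝ → ℝ → ℝ := fun y s => Real.exp (-(lam + s) * y) * (y - 1) ^ (-ρ) with hF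
  have hFm : Measurable (Function.uncurry F) := by
    apply Measurable.mul
    · exact (((measurable_const.add measurable_snd).neg.mul measurable_fst)).exp
    · fun_prop
  -- pointwise identity on Ioi 1
  have key : ∀ y ∈ Ioi (1:ℝ), Real.exp (-lam * y) / (y * (y - 1) ^ ρ)
      = ∫ s in Ioi (0:ℝ), F y s := by
    intro y hy
    have hy0 : (0:ℝ) < y := by linarith [mem_Ioi.mp hy]
    have hy1 : (0:ℝ) < y - 1 := by simpa [sub_pos] using mem_Ioi.mp hy
    have : ∀ s, F y s = (Real.exp (-lam * y) * (y - 1) ^ (-ρ)) * Real.exp (-(y * s)) := by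
      intro s
      rw [hF]; dsimp only
      rw [show -(lam + s) * y = -lam * y + -(y * s) by ring, Real.exp_add]
      ring
    simp_rw [this]
    rw [integral_const_mul, int_exp_inv hy0, Real.rpow_neg hy1.le]
    field_simp
  rw [setIntegral_congr_fun measurableSet_Ioi key]
  -- integrability on the product
  have hnorm : ∀ y ∈ Ioi (1:ℝ), ∫ s in Ioi (0:ℝ), ‖F y s‖
      = Real.exp (-lam * y) * (y - 1) ^ (-ρ) * y⁻¹ := by
    intro y hy
    have hy0 : (0:ℝ) < y := by linarith [mem_Ioi.mp hy]
    have hy1 : (0:ℝ) < y - 1 := by simpa [sub_pos] using mem_Ioi.mp hy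
    have : ∀ s, ‖F y s‖ = (Real.exp (-lam * y) * (y - 1) ^ (-ρ)) * Real.exp (-(y * s)) := by
      intro s
      rw [hF]; dsimp only
      rw [Real.norm_eq_abs, abs_of_nonneg (by positivity),
        show -(lam + s) * y = -lam * y + -(y * s) by ring, Real.exp_add]
      ring
    simp_rw [this]
    rw [integral_const_mul, int_exp_inv hy0]
  have hFint : Integrable (Function.uncurry F)
      ((volume.restrict (Ioi (1:ℝ))).prod (volume.restrict (Ioi (0:ℝ)))) := by
    rw [integrable_prod_iff hFm.aestronglyMeasurable]
    constructor
    · filter_upwards [ae_restrict_mem measurableSet_Ioi] with y hy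
      have hy0 : (0:ℝ) < y := by linarith [mem_Ioi.mp hy]
      have h0 : IntegrableOn (fun s => (Real.exp (-lam * y) * (y - 1) ^ (-ρ)) * Real.exp (-y * s))
          (Ioi (0:ℝ)) := (exp_neg_integrableOn_Ioi 0 hy0).const_mul _
      refine h0.congr_fun (fun s _ => ?_) measurableSet_Ioi
      simp only [hF, Function.uncurry]
      rw [show -(lam + s) * y = -lam * y + (-y * s) by ring, Real.exp_add]
      ring
    · have hb : IntegrableOn (fun y => Real.exp (-lam * y) * (y - 1) ^ (-ρ)) (Ioi (1:ℝ)) :=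
        lemA_int hρ hl
      refine Integrable.mono' hb (hFm.norm.aestronglyMeasurable.integral_prod_right') ?_
      filter_upwards [ae_restrict_mem measurableSet_Ioi] with y hy
      have hy0 : (0:ℝ) < y := by linarith [mem_Ioi.mp hy]
      have hy1 : (0:ℝ) < y - 1 := by simpa [sub_pos] using mem_Ioi.mp hy
      simp only [Function.uncurry]
      rw [Real.norm_eq_abs, abs_of_nonneg (by
        exact integral_nonneg fun s => norm_nonneg _), hnorm y hy]
      have hyinv : y⁻¹ ≤ 1 := by
        rw [inv_le_one_iff₀]; right; linarith [mem_Ioi.mp hy]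
      calc Real.exp (-lam * y) * (y - 1) ^ (-ρ) * y⁻¹
          ≤ Real.exp (-lam * y) * (y - 1) ^ (-ρ) * 1 := by
            apply mul_le_mul_of_nonneg_left hyinv (by positivity)
        _ = Real.exp (-lam * y) * (y - 1) ^ (-ρ) := by ring
  -- swap
  rw [integral_integral_swap hFint]
  -- inner integral via lemA
  have inner : ∀ s ∈ Ioi (0:ℝ), ∫ y in Ioi (1:ℝ), F y s
      = Real.Gamma (1 - ρ) * (Real.exp (-(s + lam)) * (s + lam) ^ (ρ - 1)) := by
    intro s hs
    have hls : 0 < lam + s := by linarith [mem_Ioi.mp hs]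
    have h2 := lemA hρ hls
    simp only [hF]
    rw [h2, show lam + s = s + lam by ring]
    ring
  rw [setIntegral_congr_fun measurableSet_Ioi inner, integral_const_mul]
  congr 1
  rw [uGamma, shiftIoi (fun w => Real.exp (-w) * w ^ (ρ - 1)) lam]

lemma lDens_measurable (ρ θ : ℝ) : Measurable (lDens ρ θ) := by
  unfold lDens
  apply Measurable.ite (measurableSet_lt measurable_const measurable_id)
  · fun_prop
  · exact measurable_const

lemma lDens_nonneg {ρ θ : ℝ} (hρ : ρ ∈ Set.Ioo (0:ℝ) 1) (hθ : 0 < θ) (y : ℝ) :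
    0 ≤ lDens ρ θ y := by
  unfold lDens
  split
  · next h =>
    have h1 : 0 < uGamma ρ θ := uGamma_pos hρ.1 hθ.le
    have h2 : 0 < Real.Gamma (1 - ρ) := Real.Gamma_pos_of_pos (by linarith [hρ.2])
    have h3 : (0:ℝ) < y := by linarith
    have h4 : (0:ℝ) < y - 1 := by linarith
    positivity
  · exact le_refl _

lemma main_real {ρ θ c : ℝ} (hρ : ρ ∈ Set.Ioo (0:ℝ) 1) (hθ : 0 < θ) (hc : 0 ≤ c) :
    ∫ y in Ioi (1:ℝ), lDens ρ θ y * Real.exp (-c * y)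
      = uGamma ρ (θ + c) / uGamma ρ θ := by
  have h1 : 0 < uGamma ρ θ := uGamma_pos hρ.1 hθ.le
  have h2 : 0 < Real.Gamma (1 - ρ) := Real.Gamma_pos_of_pos (by linarith [hρ.2])
  have key : ∀ y ∈ Ioi (1:ℝ), lDens ρ θ y * Real.exp (-c * y)
      = (uGamma ρ θ * Real.Gamma (1 - ρ))⁻¹ * (Real.exp (-(θ + c) * y) / (y * (y - 1) ^ ρ)) := by
    intro y hy
    have hy1 : (1:ℝ) < y := mem_Ioi.mp hy
    unfold lDens
    rw [if_pos hy1, show -(θ + c) * y = -θ * y + -(c * y) by ring, Real.exp_add]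
    have hy0 : (0:ℝ) < y := by linarith
    have hym : (0:ℝ) < y - 1 := by linarith
    have : (0:ℝ) < (y-1) ^ ρ := Real.rpow_pos_of_pos hym ρ
    field_simp
  rw [setIntegral_congr_fun measurableSet_Ioi key, integral_const_mul,
    lemB hρ (by linarith)]
  field_simp

lemma lDens_zero {ρ θ y : ℝ} (h : ¬ 1 < y) : lDens ρ θ y = 0 := by
  unfold lDens; rw [if_neg h]

theorem stmt_8 (ρ θ α : ℝ) (hρ : ρ ∈ Set.Ioo (0 : ℝ) 1) (hθ : 0 < θ)
    (hα : α ∈ Set.Ioo (0 : ℝ) 2)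
    (n : ℕ) (t : Fin n → ℝ) (ht0 : ∀ j, 0 ≤ t j) (htmono : Monotone t)
    (Ω : Type*) [MeasureSpace Ω] [IsProbabilityMeasure (ℙ : Measure Ω)]
    (Y : Ω → ℝ) (X : Ω → Fin n → ℝ) (hYmeas : Measurable Y) (hXmeas : Measurable X)
    (hindep : IndepFun Y X)
    (hYlaw : Measure.map Y ℙ
        = (volume : Measure ℝ).withDensity fun s => ENNReal.ofReal (lDens ρ θ s))
    (hXgauss : ∀ ξ : Fin n → ℝ,
        ∫ ω, Complex.exp (Complex.I * ((∑ j, ξ j * X ω j : ℝ) : ℂ))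
          = Complex.exp (((-(1 / 2) * ∑ j, ∑ k, ξ j * gammaCov α (t j) (t k) * ξ k : ℝ) : ℂ))) :
    ∀ ξ : Fin n → ℝ,
      ∫ ω, Complex.exp (Complex.I * ((Real.sqrt (Y ω) * ∑ j, ξ j * X ω j : ℝ) : ℂ))
        = ((uGamma ρ (θ + (1 / 2) * ∑ j, ∑ k, ξ j * ξ k * gammaCov α (t j) (t k))
            / uGamma ρ θ : ℝ) : ℂ) := by
  intro ξ
  set Q : ℝ := ∑ j, ∑ k, ξ j * gammaCov α (t j) (t k) * ξ k with hQdef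
  -- Q is nonnegative
  have hQ0 : 0 ≤ Q := by
    have h := hXgauss ξ
    have hle : ‖∫ ω, Complex.exp (Complex.I * ((∑ j, ξ j * X ω j : ℝ) : ℂ))‖ ≤ 1 := by
      have hb : ∀ᵐ ω ∂(ℙ : Measure Ω),
          ‖Complex.exp (Complex.I * ((∑ j, ξ j * X ω j : ℝ) : ℂ))‖ ≤ 1 := by
        filter_upwards with ω
        rw [Complex.norm_exp]
        simp [Complex.mul_re]
      simpa using norm_integral_le_of_norm_le_const hb
    rw [h, Complex.norm_exp] at hle
    simp only [Complex.ofReal_re] at hle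
    have := Real.exp_le_one_iff.mp hle
    nlinarith
  -- the joint pushforward splits as a product
  classical
  set g : ℝ × (Fin n → ℝ) → ℂ :=
    fun p => Complex.exp (Complex.I * ((Real.sqrt p.1 * ∑ j, ξ j * p.2 j : ℝ) : ℂ)) with hg
  have hSm : Measurable fun p : ℝ × (Fin n → ℝ) =>
      (Real.sqrt p.1 * ∑ j, ξ j * p.2 j : ℝ) := by
    apply Measurable.mul
    · exact Real.continuous_sqrt.measurable.comp measurable_fst
    · exact Finset.measurable_sum _ fun j _ =>
        measurable_const.mul ((measurable_pi_apply j).comp measurable_snd)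
  have hgm : Measurable g := (measurable_const.mul (Complex.measurable_ofReal.comp hSm)).cexp
  have hYX : Measurable fun ω => (Y ω, X ω) := hYmeas.prodMk hXmeas
  have hmap : (ℙ : Measure Ω).map (fun ω => (Y ω, X ω))
      = (Measure.map Y ℙ).prod (Measure.map X ℙ) :=
    (indepFun_iff_map_prod_eq_prod_map_map hYmeas.aemeasurable hXmeas.aemeasurable).mp hindep
  have hPY : IsProbabilityMeasure (Measure.map Y ℙ) :=
    Measure.isProbabilityMeasure_map hYmeas.aemeasurable
  have hPX : IsProbabilityMeasure (Measure.map X ℙ) :=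
    Measure.isProbabilityMeasure_map hXmeas.aemeasurable
  have hgnorm : ∀ p, ‖g p‖ = 1 := by
    intro p
    rw [hg]; dsimp only
    rw [Complex.norm_exp]
    simp [Complex.mul_re]
  have hgint : Integrable g ((Measure.map Y ℙ).prod (Measure.map X ℙ)) := by
    refine (integrable_const (1:ℝ)).mono' hgm.aestronglyMeasurable ?_
    filter_upwards with p
    rw [hgnorm p]
  have step1 : ∫ ω, Complex.exp (Complex.I * ((Real.sqrt (Y ω) * ∑ j, ξ j * X ω j : ℝ) : ℂ))
      = ∫ p, g p ∂((Measure.map Y ℙ).prod (Measure.map X ℙ)) := by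
    rw [← hmap, integral_map hYX.aemeasurable hgm.aestronglyMeasurable]
  rw [step1, integral_prod g hgint]
  -- inner integral: Gaussian characteristic function
  have inner_eq : ∀ y : ℝ, 0 ≤ y → (∫ x, g (y, x) ∂(Measure.map X ℙ))
      = ((Real.exp (-(1/2) * (y * Q)) : ℝ) : ℂ) := by
    intro y hy
    have h1 : (∫ x, g (y, x) ∂(Measure.map X ℙ))
        = ∫ ω, g (y, X ω) ∂(ℙ : Measure Ω) := by
      rw [integral_map hXmeas.aemeasurable]
      exact (hgm.comp (measurable_const.prodMk measurable_id)).aestronglyMeasurable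
    have h2 := hXgauss (fun j => Real.sqrt y * ξ j)
    have h3 : ∀ ω, (∑ j, (Real.sqrt y * ξ j) * X ω j : ℝ)
        = (Real.sqrt y * ∑ j, ξ j * X ω j : ℝ) := by
      intro ω
      rw [Finset.mul_sum]
      exact Finset.sum_congr rfl fun j _ => by ring
    have h4 : (∑ j, ∑ k, (Real.sqrt y * ξ j) * gammaCov α (t j) (t k) * (Real.sqrt y * ξ k))
        = y * Q := by
      rw [hQdef, Finset.mul_sum]
      refine Finset.sum_congr rfl fun j _ => ?_
      rw [Finset.mul_sum]
      refine Finset.sum_congr rfl fun k _ => ?_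
      have hss : Real.sqrt y * Real.sqrt y = y := Real.mul_self_sqrt hy
      linear_combination (ξ j * gammaCov α (t j) (t k) * ξ k) * hss
    simp_rw [h3, h4] at h2
    rw [h1, hg]
    dsimp only
    rw [h2, ← Complex.ofReal_exp]
  -- outer integral over the law of Y
  rw [hYlaw]
  have hld : Measurable fun s => (lDens ρ θ s).toNNReal :=
    (lDens_measurable ρ θ).real_toNNReal
  have hwd : (volume : Measure ℝ).withDensity (fun s => ENNReal.ofReal (lDens ρ θ s))
      = (volume : Measure ℝ).withDensity (fun s => ((lDens ρ θ s).toNNReal : ENNReal)) := rfl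
  rw [hwd, integral_withDensity_eq_integral_smul hld]
  -- restrict to (1, ∞)
  have hzero : ∀ y ∉ Ioi (1:ℝ),
      (lDens ρ θ y).toNNReal • (∫ x, g (y, x) ∂(Measure.map X ℙ)) = 0 := by
    intro y hy
    rw [lDens_zero (by simpa using hy)]
    simp
  rw [← setIntegral_eq_integral_of_forall_compl_eq_zero hzero]
  have hcong : ∀ y ∈ Ioi (1:ℝ),
      (lDens ρ θ y).toNNReal • (∫ x, g (y, x) ∂(Measure.map X ℙ))
      = ((lDens ρ θ y * Real.exp (-(Q/2) * y) : ℝ) : ℂ) := by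
    intro y hy
    have hy0 : (0:ℝ) ≤ y := by have := mem_Ioi.mp hy; linarith
    rw [inner_eq y hy0, NNReal.smul_def, Real.coe_toNNReal _ (lDens_nonneg hρ hθ y),
      Complex.real_smul, ← Complex.ofReal_mul]
    congr 2
    ring_nf
  have hor : (∫ y in Ioi (1:ℝ), ((lDens ρ θ y * Real.exp (-(Q/2) * y) : ℝ) : ℂ))
      = ((∫ y in Ioi (1:ℝ), lDens ρ θ y * Real.exp (-(Q/2) * y) : ℝ) : ℂ) := integral_ofReal
  rw [setIntegral_congr_fun measurableSet_Ioi hcong, hor,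
    main_real hρ hθ (by linarith : (0:ℝ) ≤ Q/2)]
  have hQeq : θ + Q/2 = θ + 1/2 * ∑ j, ∑ k, ξ j * ξ k * gammaCov α (t j) (t k) := by
    rw [hQdef]
    rw [show (∑ j, ∑ k, ξ j * gammaCov α (t j) (t k) * ξ k)
        = ∑ j, ∑ k, ξ j * ξ k * gammaCov α (t j) (t k) from
      Finset.sum_congr rfl fun j _ => Finset.sum_congr rfl fun k _ => by ring]
    ring
  rw [hQeq]
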